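/- With α_1 = 1/3, α_2 = 1/6, β = 1/4, let D_1(p) = [−p log p − (1−p) log(1−p) + p log 4]/[p log 6 + (1−p) log 3] + (2−p) log 2/ log 4 and D_2(p) = [−p log p − (1−p) log(1−p) + p log 2]/[p log 6 + (1−p) log 3] + log 4/ log 4. Then sup over p ∈ [0,1] of D_1(p) < sup over p ∈ [0,1] of D_2(p). -/

import Mathlib

open Real Set

/-- `D₁(p)` from the Barański example with `α₁ = 1/3`, `α₂ = 1/6`, `β = 1/4`. -/
noncomputable def D₁ (p : ℝ) : ℝ :=
  (-(p * Real.log p) - (1 - p) * Real.log (1 - p) + p * Real.log 4) /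
      (p * Real.log 6 + (1 - p) * Real.log 3)
    + ((2 - p) * Real.log 2) / Real.log 4

/-- `D₂(p)` from the Barański example with `α₁ = 1/3`, `α₂ = 1/6`, `β = 1/4`. -/
noncomputable def D₂ (p : ℝ) : ℝ :=
  (-(p * Real.log p) - (1 - p) * Real.log (1 - p) + p * Real.log 2) /
      (p * Real.log 6 + (1 - p) * Real.log 3)
    + Real.log 4 / Real.log 4

lemma ent_le_log_two {p : ℝ} :
    -(p * Real.log p) - (1 - p) * Real.log (1 - p) ≤ Real.log 2 := by
  have h := Real.binEntropy_le_log_two (p := p)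
  rw [Real.binEntropy, Real.log_inv, Real.log_inv] at h
  linarith

lemma ent_nonneg {p : ℝ} (h0 : 0 ≤ p) (h1 : p ≤ 1) :
    0 ≤ -(p * Real.log p) - (1 - p) * Real.log (1 - p) := by
  have h2 : Real.log p ≤ 0 := Real.log_nonpos h0 h1
  have h3 : Real.log (1 - p) ≤ 0 := Real.log_nonpos (by linarith) (by linarith)
  nlinarith

lemma log4_eq : Real.log 4 = 2 * Real.log 2 := by
  rw [show (4:ℝ) = 2 ^ 2 by norm_num, Real.log_pow]; push_cast; ring

lemma log6_eq : Real.log 6 = Real.log 2 + Real.log 3 := by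
  rw [show (6:ℝ) = 2 * 3 by norm_num, Real.log_mul (by norm_num) (by norm_num)]

lemma log3_bounds : 1.09860 ≤ Real.log 3 ∧ Real.log 3 ≤ 1.09862 := by
  have key : 12 * Real.log 3 = 19 * Real.log 2 + Real.log (531441 / 524288) := by
    rw [Real.log_div (by norm_num) (by norm_num),
      show (531441:ℝ) = 3 ^ 12 by norm_num, show (524288:ℝ) = 2 ^ 19 by norm_num,
      Real.log_pow, Real.log_pow]
    push_cast; ring
  have hub : Real.log (531441 / 524288) ≤ 531441 / 524288 - 1 :=
    Real.log_le_sub_one_of_pos (by norm_num)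
  have hlb : 1 - 524288 / 531441 ≤ Real.log (531441 / 524288) := by
    have := Real.one_sub_inv_le_log_of_pos (x := 531441 / 524288) (by norm_num)
    rw [show ((531441:ℝ) / 524288)⁻¹ = 524288 / 531441 by norm_num] at this
    linarith
  have l2lb := Real.log_two_gt_d9
  have l2ub := Real.log_two_lt_d9
  constructor <;> nlinarith

lemma denom_pos {p : ℝ} (h0 : 0 ≤ p) (h1 : p ≤ 1) :
    0 < p * Real.log 6 + (1 - p) * Real.log 3 := by
  have l2 := Real.log_two_gt_d9
  have ⟨l3a, l3b⟩ := log3_bounds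
  rw [log6_eq]
  nlinarith

lemma D1_le : ∀ p ∈ Icc (0:ℝ) 1, D₁ p ≤ 12 / 7 := by
  rintro p ⟨h0, h1⟩
  have hden := denom_pos h0 h1
  have hl2 : (0:ℝ) < Real.log 2 := Real.log_pos (by norm_num)
  have l2lb := Real.log_two_gt_d9
  have l2ub := Real.log_two_lt_d9
  have ⟨l3a, l3b⟩ := log3_bounds
  have hE := ent_le_log_two (p := p)
  unfold D₁
  rw [log6_eq] at hden
  rw [log4_eq, log6_eq]
  have hB : (2 - p) * Real.log 2 / (2 * Real.log 2) = (2 - p) / 2 := by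
    field_simp
  rw [hB, ← sub_nonneg]
  have key : 0 ≤ ((12/7 - (2 - p)/2) * (p * (Real.log 2 + Real.log 3) + (1 - p) * Real.log 3)
      - (-(p * Real.log p) - (1 - p) * Real.log (1 - p) + p * (2 * Real.log 2))) := by
    nlinarith [sq_nonneg (2*p - 1), mul_nonneg h0 (sub_nonneg.2 h1),
    mul_nonneg (mul_nonneg h0 (sub_nonneg.2 h1)) hl2.le,
    mul_nonneg h0 hl2.le, mul_nonneg (sub_nonneg.2 h1) hl2.le,
    mul_le_mul_of_nonneg_right hE hl2.le,
    mul_nonneg (sq_nonneg (2*p-1)) hl2.le]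
  have := div_nonneg key hden.le
  rw [sub_div] at this
  rw [mul_div_assoc, div_self (ne_of_gt hden), mul_one] at this
  linarith

lemma D2_half : 12 / 7 < D₂ (1/2) := by
  have hden := denom_pos (p := 1/2) (by norm_num) (by norm_num)
  have hl2 : (0:ℝ) < Real.log 2 := Real.log_pos (by norm_num)
  have hl4 : (0:ℝ) < Real.log 4 := Real.log_pos (by norm_num)
  have key : 5 * Real.log 3 < 8 * Real.log 2 := by
    have : Real.log 243 < Real.log 256 := Real.log_lt_log (by norm_num) (by norm_num)
    rw [show (243:ℝ) = 3 ^ 5 by norm_num, show (256:ℝ) = 2 ^ 8 by norm_num,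
      Real.log_pow, Real.log_pow] at this
    push_cast at this; linarith
  unfold D₂
  rw [div_self (ne_of_gt hl4)]
  rw [show Real.log (1 - 1/2 : ℝ) = - Real.log 2 by
    rw [show (1 - 1/2 : ℝ) = 2⁻¹ by norm_num, Real.log_inv],
    show Real.log (1/2 : ℝ) = - Real.log 2 by rw [one_div, Real.log_inv]]
  rw [log6_eq] at hden ⊢
  rw [show (12:ℝ)/7 = 5/7 + 1 by norm_num, add_lt_add_iff_right, lt_div_iff₀ hden]
  nlinarith

lemma D2_bdd : BddAbove (D₂ '' Icc (0:ℝ) 1) := by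
  refine ⟨3, ?_⟩
  rintro x ⟨p, ⟨h0, h1⟩, rfl⟩
  have hden := denom_pos h0 h1
  have hl2 : (0:ℝ) < Real.log 2 := Real.log_pos (by norm_num)
  have hl4 : (0:ℝ) < Real.log 4 := Real.log_pos (by norm_num)
  have l2lb := Real.log_two_gt_d9
  have l2ub := Real.log_two_lt_d9
  have ⟨l3a, l3b⟩ := log3_bounds
  have hE := ent_le_log_two (p := p)
  unfold D₂
  rw [div_self (ne_of_gt hl4)]
  have hE0 := ent_nonneg h0 h1
  have hnum : -(p * Real.log p) - (1 - p) * Real.log (1 - p) + p * Real.log 2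
      ≤ 2 * Real.log 2 := by nlinarith
  have h4 : (-(p * Real.log p) - (1 - p) * Real.log (1 - p) + p * Real.log 2) /
      (p * Real.log 6 + (1 - p) * Real.log 3) ≤ 2 := by
    rw [div_le_iff₀ hden, log6_eq] at *
    nlinarith [mul_nonneg h0 hl2.le]
  linarith

/-- The supremum of `D₁` over `[0,1]` is strictly smaller than that of `D₂`. -/
theorem stmt16 : sSup (D₁ '' Icc (0:ℝ) 1) < sSup (D₂ '' Icc (0:ℝ) 1) := by
  have h1 : sSup (D₁ '' Icc (0:ℝ) 1) ≤ 12 / 7 := by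
    apply csSup_le (by exact ⟨D₁ 0, 0, by norm_num, rfl⟩)
    rintro x ⟨p, hp, rfl⟩
    exact D1_le p hp
  have h2 : D₂ (1/2) ≤ sSup (D₂ '' Icc (0:ℝ) 1) :=
    le_csSup D2_bdd ⟨1/2, by norm_num, rfl⟩
  linarith [D2_half]
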